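/- Let G be an invertible p×p real matrix, R a p×p orthogonal matrix, and L = {Rᵀ Gᵀ f : f ∈ ℤ^p}. Suppose that for every nonzero f ∈ ℤ^p and every j ∈ {1, …, p}, (Rᵀ Gᵀ f)_j ≠ 0 (i.e., each one-dimensional coordinate projection is injective on L). Let n ≥ 1 be an integer and l > 0 satisfy l^p = n·|det(G)|. Then there exists δ in the Voronoi cell of the origin with respect to L such that the set {x ∈ L : x + δ ∈ [−l/2, l/2]^p} has exactly n elements. -/

import Mathlib

/-!
Write `Λ` for the lattice and `N c` for the number of its points in the cube of side `l`
centred at `c`; the box condition `x + δ ∈ [-l/2, l/2]^p` says that `x` lies in the cube centred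
at `-δ`. Integrating `N` over a fundamental domain `F` counts each lattice translate of the cube
once, so the mean of `N` on `F` is `l^p / |det G| = n`: somewhere `N ≤ n` and somewhere `N ≥ n`.
When the centre moves along a coordinate axis, injectivity of that coordinate on `Λ` lets at most
one lattice point cross the boundary at a time, so `N` takes every intermediate value on such a
segment; joining the two centres by axis-parallel segments gives `N c = n`. Subtracting the lattice
point nearest to `c` then moves `-c` into the Voronoi cell without changing `N`.
-/

open Set Metric Filter Topology MeasureTheory Matrix
open scoped ENNReal Pointwise

theorem uIcc_subset_range_of_eventually_le_succ {X : Type*} [TopologicalSpace X]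
    [PreconnectedSpace X] {g : X → ℕ} (hg : ∀ x, ∀ᶠ y in 𝓝 x, g y ≤ g x ∧ g x ≤ g y + 1)
    (a b : X) : uIcc (g a) (g b) ⊆ range g := by
  intro m hm
  by_contra hm'
  have hne : ∀ x, g x ≠ m := fun x hx => hm' ⟨x, hx⟩
  have hclopen : IsClopen {x | g x < m} := by
    refine ⟨isOpen_compl_iff.mp ?_, isOpen_iff_mem_nhds.mpr fun x hx => ?_⟩
    · refine isOpen_iff_mem_nhds.mpr fun x hx => ?_
      have hx : m < g x := lt_of_le_of_ne (not_lt.mp hx) (hne x).symm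
      filter_upwards [hg x] with y hy
      exact fun hym => hne y (by simp only [mem_ofPred_eq] at hym; omega)
    · filter_upwards [hg x] with y hy
      exact lt_of_le_of_lt hy.1 hx
  rw [mem_uIcc] at hm
  have ha := hne a
  have hb := hne b
  rcases isClopen_iff.mp hclopen with h | h
  · have ha' := eq_empty_iff_forall_notMem.mp h a
    have hb' := eq_empty_iff_forall_notMem.mp h b
    simp only [mem_ofPred_eq, not_lt] at ha' hb'
    omega
  · have ha' := eq_univ_iff_forall.mp h a
    have hb' := eq_univ_iff_forall.mp h b
    simp only [mem_ofPred_eq] at ha' hb'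
    omega

theorem uIcc_subset_range_of_update {ι β α : Type*} [Fintype ι] [DecidableEq ι] [LinearOrder α]
    {N : (ι → β) → α} (hN : ∀ c j s, uIcc (N c) (N (Function.update c j s)) ⊆ range N)
    (c c' : ι → β) : uIcc (N c) (N c') ⊆ range N := by
  suffices ∀ J : Finset ι, ∀ c, (∀ k ∉ J, c k = c' k) → uIcc (N c) (N c') ⊆ range N from
    this Finset.univ c fun k hk => absurd (Finset.mem_univ k) hk
  intro J
  induction J using Finset.induction_on with
  | empty =>
    intro c hc
    rw [funext fun k => hc k (Finset.notMem_empty k), uIcc_self, singleton_subset_iff]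
    exact mem_range_self c'
  | insert j J _ ih =>
    intro c hc
    refine uIcc_subset_uIcc_union_uIcc.trans (union_subset (hN c j (c' j)) (ih _ fun k hk => ?_))
    by_cases hkj : k = j
    · subst hkj; simp
    · rw [Function.update_of_ne hkj]
      exact hc k (by simp [hkj, hk])

theorem exists_pos_forall_mem_abs_sub_lt_imp_eq {Y : Set ℝ}
    (hY : ∀ c ρ, (Y ∩ closedBall c ρ).Finite) (z : ℝ) :
    ∃ ε > 0, ∀ y ∈ Y, |y - z| < ε → y = z := by
  have hW : ((Y ∩ closedBall z 1) \ {z}).Finite := (hY z 1).sdiff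
  have hev : ∀ᶠ y in 𝓝 z, y ∈ Y → y = z := by
    filter_upwards [hW.isClosed.isOpen_compl.mem_nhds (by simp), closedBall_mem_nhds z one_pos]
      with y hyW hyB hyY
    by_contra hne
    exact hyW ⟨⟨hyY, hyB⟩, hne⟩
  obtain ⟨ε, hε, h⟩ := Metric.eventually_nhds_iff.mp hev
  exact ⟨ε, hε, fun y hy hyz => h (by rwa [Real.dist_eq]) hy⟩

theorem eventually_ncard_inter_closedBall_le {Y : Set ℝ}
    (hY : ∀ c ρ, (Y ∩ closedBall c ρ).Finite) (r s₀ : ℝ) :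
    ∀ᶠ s in 𝓝 s₀, (Y ∩ closedBall s r).ncard ≤ (Y ∩ closedBall s₀ r).ncard ∧
      (Y ∩ closedBall s₀ r).ncard ≤ (Y ∩ closedBall s r).ncard + 1 := by
  obtain ⟨ε₁, hε₁, hlo⟩ := exists_pos_forall_mem_abs_sub_lt_imp_eq hY (s₀ - r)
  obtain ⟨ε₂, hε₂, hhi⟩ := exists_pos_forall_mem_abs_sub_lt_imp_eq hY (s₀ + r)
  filter_upwards [ball_mem_nhds s₀ (lt_min hε₁ hε₂)] with s hs
  rw [mem_ball, Real.dist_eq, lt_min_iff, abs_lt, abs_lt] at hs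
  have hsub : Y ∩ closedBall s r ⊆ Y ∩ closedBall s₀ r := by
    rintro y ⟨hyY, hy⟩
    simp only [Real.closedBall_eq_Icc, mem_Icc] at hy ⊢
    refine ⟨hyY, ?_, ?_⟩
    · by_contra h
      have := hlo y hyY (by rw [abs_lt]; constructor <;> linarith)
      linarith
    · by_contra h
      have := hhi y hyY (by rw [abs_lt]; constructor <;> linarith)
      linarith
  -- only the endpoint of the old window on the side it moves away from can be lost
  have hsup : ∃ z, Y ∩ closedBall s₀ r ⊆ insert z (Y ∩ closedBall s r) := by
    rcases le_total s s₀ with hss | hss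
    · refine ⟨s₀ + r, fun y ⟨hyY, hy⟩ => or_iff_not_imp_left.mpr fun hne => ⟨hyY, ?_⟩⟩
      simp only [Real.closedBall_eq_Icc, mem_Icc] at hy ⊢
      refine ⟨by linarith, ?_⟩
      by_contra h
      exact hne (hhi y hyY (by rw [abs_lt]; constructor <;> linarith))
    · refine ⟨s₀ - r, fun y ⟨hyY, hy⟩ => or_iff_not_imp_left.mpr fun hne => ⟨hyY, ?_⟩⟩
      simp only [Real.closedBall_eq_Icc, mem_Icc] at hy ⊢
      refine ⟨?_, by linarith⟩
      by_contra h
      exact hne (hlo y hyY (by rw [abs_lt]; constructor <;> linarith))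
  obtain ⟨z, hz⟩ := hsup
  exact ⟨ncard_le_ncard hsub (hY s₀ r),
    (ncard_le_ncard hz ((hY s r).insert z)).trans (ncard_insert_le z _)⟩

/-- On `ι → ℝ`, with its sup norm, `closedBall c r` is the cube `∏ k, [c k - r, c k + r]`. -/
noncomputable def ballCount {E : Type*} [PseudoMetricSpace E] (Λ : Set E) (r : ℝ) (c : E) : ℕ :=
  (Λ ∩ closedBall c r).ncard

theorem ballCount_vadd {E : Type*} [NormedAddCommGroup E] {Λ : AddSubgroup E} {v : E} (hv : v ∈ Λ)
    (r : ℝ) (c : E) : ballCount Λ r (v +ᵥ c) = ballCount Λ r c := by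
  unfold ballCount
  rw [← vadd_closedBall, ← ncard_vadd_set v (_ ∩ closedBall c r), vadd_set_inter, vadd_coe_set hv]

theorem encard_neg_vadd_mem_closedBall_zero {E : Type*} [NormedAddCommGroup E] (Λ : AddSubgroup E)
    (r : ℝ) (x : E) :
    {g : Λ | -g +ᵥ x ∈ closedBall 0 r}.encard = ((Λ : Set E) ∩ closedBall x r).encard := by
  rw [← Subtype.val_injective.encard_image]
  congr 1
  ext y
  simp [AddSubgroup.vadd_def, dist_eq_norm, neg_add_eq_sub, norm_sub_rev, and_comm]

section Coordinates

variable {ι : Type*} [Fintype ι] [DecidableEq ι] {Λ : Set (ι → ℝ)} {r : ℝ}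

theorem inter_closedBall_update (hr : 0 ≤ r) (c : ι → ℝ) (j : ι) (s : ℝ) :
    Λ ∩ closedBall (Function.update c j s) r =
      {x ∈ Λ | ∀ k ≠ j, dist (x k) (c k) ≤ r} ∩ (fun x => x j) ⁻¹' closedBall s r := by
  ext x
  simp only [mem_inter_iff, mem_closedBall, dist_pi_le_iff hr, mem_preimage, mem_ofPred_eq]
  constructor
  · rintro ⟨hx, h⟩
    refine ⟨⟨hx, fun k hk => ?_⟩, by simpa using h j⟩
    simpa [Function.update_of_ne hk] using h k
  · rintro ⟨⟨hx, h⟩, hj⟩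
    refine ⟨hx, fun k => ?_⟩
    by_cases hk : k = j
    · subst hk; simpa using hj
    · simpa [Function.update_of_ne hk] using h k hk

theorem eventually_ballCount_update_le (hΛ : ∀ c ρ, (Λ ∩ closedBall c ρ).Finite) {j : ι}
    (hinj : InjOn (fun x => x j) Λ) (hr : 0 ≤ r) (c : ι → ℝ) (s₀ : ℝ) :
    ∀ᶠ s in 𝓝 s₀, ballCount Λ r (Function.update c j s) ≤ ballCount Λ r (Function.update c j s₀) ∧
      ballCount Λ r (Function.update c j s₀) ≤ ballCount Λ r (Function.update c j s) + 1 := by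
  set Λ' := {x ∈ Λ | ∀ k ≠ j, dist (x k) (c k) ≤ r}
  have hcount : ∀ s, ballCount Λ r (Function.update c j s) =
      ((fun x => x j) '' Λ' ∩ closedBall s r).ncard := fun s => by
    rw [ballCount, inter_closedBall_update hr, ← image_inter_preimage,
      (hinj.mono fun x hx => hx.1.1).ncard_image]
  have hY : ∀ t ρ, ((fun x => x j) '' Λ' ∩ closedBall t ρ).Finite := fun t ρ => by
    rw [← image_inter_preimage]
    refine ((hΛ (Function.update c j t) (max r ρ)).subset ?_).image _
    rintro x ⟨⟨hx, hk⟩, hj⟩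
    refine ⟨hx, (dist_pi_le_iff (le_max_of_le_left hr)).mpr fun k => ?_⟩
    by_cases hkj : k = j
    · subst hkj; simpa using le_max_of_le_right hj
    · simpa [Function.update_of_ne hkj] using le_max_of_le_left (hk k hkj)
  simp only [hcount]
  exact eventually_ncard_inter_closedBall_le hY r s₀

theorem uIcc_ballCount_subset_range (hΛ : ∀ c ρ, (Λ ∩ closedBall c ρ).Finite)
    (hinj : ∀ j, InjOn (fun x => x j) Λ) (hr : 0 ≤ r) (c c' : ι → ℝ) :
    uIcc (ballCount Λ r c) (ballCount Λ r c') ⊆ range (ballCount Λ r) := by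
  refine uIcc_subset_range_of_update (fun c j s => ?_) c c'
  have h := uIcc_subset_range_of_eventually_le_succ
    (eventually_ballCount_update_le hΛ (hinj j) hr c) (c j) s
  rw [Function.update_eq_self] at h
  exact h.trans (range_comp_subset_range (Function.update c j) (ballCount Λ r))

end Coordinates

section Averaging

variable {G α : Type*} [AddGroup G] [AddAction G α] {F K : Set α}

theorem encard_neg_vadd_mem_eq_tsum (K : Set α) (x : α) :
    ({g : G | -g +ᵥ x ∈ K}.encard : ℝ≥0∞) = ∑' g : G, K.indicator 1 (-g +ᵥ x) := by
  rw [← ENNReal.tsum_set_one, tsum_subtype _ fun _ => (1 : ℝ≥0∞)]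
  rfl

variable [MeasurableSpace α] [MeasurableConstVAdd G α] [Countable G] {μ : Measure α}

theorem measurable_encard_neg_vadd_mem (hK : MeasurableSet K) :
    Measurable fun x => ({g : G | -g +ᵥ x ∈ K}.encard : ℝ≥0∞) := by
  simp_rw [encard_neg_vadd_mem_eq_tsum]
  exact Measurable.tsum fun g => (measurable_one.indicator hK).comp (measurable_const_vadd (-g))

theorem MeasureTheory.IsAddFundamentalDomain.setLIntegral_encard_neg_vadd_mem
    [VAddInvariantMeasure G α μ] (hF : IsAddFundamentalDomain G F μ) (hK : MeasurableSet K) :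
    ∫⁻ x in F, ({g : G | -g +ᵥ x ∈ K}.encard : ℝ≥0∞) ∂μ = μ K := by
  simp_rw [encard_neg_vadd_mem_eq_tsum]
  rw [lintegral_tsum (f := fun (g : G) x => K.indicator 1 (-g +ᵥ x)) fun g =>
      ((measurable_one.indicator hK).comp (measurable_const_vadd (-g))).aemeasurable,
    ← hF.lintegral_eq_tsum', lintegral_indicator_one hK]

theorem MeasureTheory.IsAddFundamentalDomain.exists_encard_neg_vadd_mem_le_and_exists_ge
    [VAddInvariantMeasure G α μ] (hF : IsAddFundamentalDomain G F μ) (hK : MeasurableSet K)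
    (hF₀ : μ F ≠ 0) (hF₁ : μ F ≠ ∞) {n : ℕ} (hvol : μ K = n * μ F) :
    (∃ x ∈ F, {g : G | -g +ᵥ x ∈ K}.encard ≤ n) ∧ ∃ x ∈ F, n ≤ {g : G | -g +ᵥ x ∈ K}.encard := by
  have hint := hF.setLIntegral_encard_neg_vadd_mem hK
  have havg : ⨍⁻ x in F, ({g : G | -g +ᵥ x ∈ K}.encard : ℝ≥0∞) ∂μ = n := by
    rw [setLAverage_eq, hint, hvol, ENNReal.mul_div_cancel_right hF₀ hF₁]
  obtain ⟨x, hxF, hx⟩ :=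
    exists_le_setLAverage hF₀ hF₁ (measurable_encard_neg_vadd_mem (G := G) hK).aemeasurable
  obtain ⟨y, hyF, hy⟩ := exists_setLAverage_le hF₀ hF.nullMeasurableSet
    (by rw [hint, hvol]; exact ENNReal.mul_ne_top (by simp) hF₁)
  rw [havg] at hx hy
  exact ⟨⟨x, hxF, by exact_mod_cast hx⟩, y, hyF, by exact_mod_cast hy⟩

end Averaging

section Lattice

variable {ι : Type*} [Fintype ι]

theorem dist_le_norm_toLp_sub (x c : ι → ℝ) : dist x c ≤ ‖WithLp.toLp 2 (c - x)‖ := by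
  refine (dist_pi_le_iff (norm_nonneg _)).mpr fun k => ?_
  rw [dist_comm, Real.dist_eq]
  exact PiLp.norm_apply_le (WithLp.toLp 2 (c - x)) k

theorem exists_mem_forall_norm_toLp_sub_le {Λ : Set (ι → ℝ)}
    (hΛ : ∀ c ρ, (Λ ∩ closedBall c ρ).Finite) (hne : Λ.Nonempty) (c : ι → ℝ) :
    ∃ v ∈ Λ, ∀ x ∈ Λ, ‖WithLp.toLp 2 (c - v)‖ ≤ ‖WithLp.toLp 2 (c - x)‖ := by
  obtain ⟨x₀, hx₀⟩ := hne
  set R := ‖WithLp.toLp 2 (c - x₀)‖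
  obtain ⟨v, ⟨hv, -⟩, hmin⟩ := exists_min_image (Λ ∩ closedBall c R)
    (fun x => ‖WithLp.toLp 2 (c - x)‖) (hΛ c R) ⟨x₀, hx₀, dist_le_norm_toLp_sub x₀ c⟩
  refine ⟨v, hv, fun x hx => ?_⟩
  by_cases hxR : dist x c ≤ R
  · exact hmin x ⟨hx, hxR⟩
  · have := hmin x₀ ⟨hx₀, dist_le_norm_toLp_sub x₀ c⟩
    linarith [dist_le_norm_toLp_sub x c]

/-- `WithLp.toLp 2` gives `ι → ℝ` the Euclidean norm. -/
def voronoiCell (Λ : Set (ι → ℝ)) : Set (ι → ℝ) :=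
  {δ | ∀ x ∈ Λ, ‖WithLp.toLp 2 δ‖ ≤ ‖WithLp.toLp 2 (δ - x)‖}

theorem exists_mem_voronoiCell_ballCount_neg_eq {Λ : AddSubgroup (ι → ℝ)}
    (hΛ : ∀ c ρ, ((Λ : Set (ι → ℝ)) ∩ closedBall c ρ).Finite) (r : ℝ) (c : ι → ℝ) :
    ∃ δ ∈ voronoiCell (Λ : Set (ι → ℝ)), ballCount (Λ : Set (ι → ℝ)) r (-δ) = ballCount Λ r c := by
  obtain ⟨v, hv, hmin⟩ := exists_mem_forall_norm_toLp_sub_le hΛ ⟨0, Λ.zero_mem⟩ c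
  refine ⟨v - c, fun x hx => ?_, ?_⟩
  · have h := hmin (v - x) (Λ.sub_mem hv hx)
    convert h using 1 <;> rw [← norm_neg, ← WithLp.toLp_neg] <;> congr 2 <;> abel
  · rw [neg_sub, sub_eq_neg_add, ← vadd_eq_add, ballCount_vadd (Λ.neg_mem hv)]

variable [DecidableEq ι]

theorem exists_mem_voronoiCell_ballCount_neg_eq_of_volume {b : Module.Basis ι ℝ (ι → ℝ)}
    (hb : ∀ x ∈ Submodule.span ℤ (range b), x ≠ 0 → ∀ j, x j ≠ 0) {r : ℝ} (hr : 0 ≤ r) {n : ℕ}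
    (hvol : volume (closedBall (0 : ι → ℝ) r) = n * volume (ZSpan.fundamentalDomain b)) :
    ∃ δ ∈ voronoiCell (Submodule.span ℤ (range b) : Set (ι → ℝ)),
      ballCount (Submodule.span ℤ (range b) : Set (ι → ℝ)) r (-δ) = n := by
  set Λ := (Submodule.span ℤ (range b)).toAddSubgroup
  have : Countable Λ := inferInstanceAs (Countable (Submodule.span ℤ (range b)))
  have hfin : ∀ c ρ, ((Λ : Set (ι → ℝ)) ∩ closedBall c ρ).Finite := fun c ρ => by
    rw [inter_comm]
    exact ZSpan.setFinite_inter b isBounded_closedBall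
  have hinj : ∀ j, InjOn (fun x => x j) (Λ : Set (ι → ℝ)) := fun j x hx y hy hxy => by
    by_contra hne
    exact hb (x - y) (Λ.sub_mem hx hy) (sub_ne_zero.mpr hne) j (by simpa [sub_eq_zero] using hxy)
  have hcount : ∀ c, {g : Λ | -g +ᵥ c ∈ closedBall (0 : ι → ℝ) r}.encard =
      ballCount (Λ : Set (ι → ℝ)) r c := fun c => by
    rw [encard_neg_vadd_mem_closedBall_zero, ballCount, (hfin c r).cast_ncard_eq]
  obtain ⟨⟨c₁, -, h₁⟩, c₂, -, h₂⟩ :=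
    (ZSpan.isAddFundamentalDomain' b volume).exists_encard_neg_vadd_mem_le_and_exists_ge measurableSet_closedBall
      (ZSpan.measure_fundamentalDomain_ne_zero b) (by simp) hvol
  rw [hcount] at h₁ h₂
  obtain ⟨c, hc⟩ := uIcc_ballCount_subset_range hfin hinj hr c₁ c₂
    (mem_uIcc.mpr (Or.inl ⟨by exact_mod_cast h₁, by exact_mod_cast h₂⟩))
  obtain ⟨δ, hδ, hδc⟩ := exists_mem_voronoiCell_ballCount_neg_eq hfin r c
  exact ⟨δ, hδ, hδc.trans hc⟩

end Lattice

section MatrixLattice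

variable {ι : Type*} [Fintype ι] [DecidableEq ι] {A : Matrix ι ι ℝ}

noncomputable def Matrix.columnBasis (hA : IsUnit A.det) : Module.Basis ι ℝ (ι → ℝ) :=
  (Pi.basisFun ℝ ι).map (A.toLinearEquiv' (A.invertibleOfIsUnitDet hA))

theorem Matrix.columnBasis_apply (hA : IsUnit A.det) (i : ι) :
    A.columnBasis hA i = A.col i := by
  simp [Matrix.columnBasis, Matrix.toLinearEquiv']

theorem Matrix.mem_span_columnBasis (hA : IsUnit A.det) (x : ι → ℝ) :
    x ∈ Submodule.span ℤ (range (A.columnBasis hA)) ↔ ∃ f : ι → ℤ, x = A *ᵥ fun i => (f i : ℝ) := by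
  rw [Submodule.mem_span_range_iff_exists_fun]
  refine exists_congr fun f => ?_
  rw [eq_comm]
  congr! 1
  ext k
  simp [Matrix.columnBasis_apply, Matrix.mulVec, dotProduct, Finset.sum_apply, mul_comm]

theorem Matrix.volume_fundamentalDomain_columnBasis (hA : IsUnit A.det) :
    volume (ZSpan.fundamentalDomain (A.columnBasis hA)) = ENNReal.ofReal |A.det| := by
  rw [ZSpan.volume_fundamentalDomain, ← Matrix.det_transpose]
  congr 4
  ext i j
  simp [Matrix.columnBasis_apply]

theorem Matrix.abs_det_eq_one_of_transpose_mul_self {R : Matrix ι ι ℝ} (hR : Rᵀ * R = 1) :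
    |R.det| = 1 := by
  have h : R.det * R.det = 1 := by simpa [det_mul, det_transpose] using congrArg det hR
  have habs : |R.det| * |R.det| = 1 := by rw [← abs_mul, h, abs_one]
  nlinarith [abs_nonneg R.det]

end MatrixLattice

theorem exists_translation_with_n_points
    (p n : ℕ)
    (G R : Matrix (Fin p) (Fin p) ℝ) (hG : IsUnit G.det) (hR : Rᵀ * R = 1)
    (hproj : ∀ f : Fin p → ℤ, f ≠ 0 → ∀ j,
      (Rᵀ * Gᵀ).mulVec (fun i => (f i : ℝ)) j ≠ 0)
    (l : ℝ) (hl : 0 < l) (hln : l ^ p = (n : ℝ) * |G.det|) :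
    ∃ δ : Fin p → ℝ,
      (∀ f : Fin p → ℤ,
        Real.sqrt (∑ k, δ k ^ 2) ≤
          Real.sqrt (∑ k, (δ k - (Rᵀ * Gᵀ).mulVec (fun i => (f i : ℝ)) k) ^ 2)) ∧
      Set.ncard {x : Fin p → ℝ |
        (∃ f : Fin p → ℤ, x = (Rᵀ * Gᵀ).mulVec (fun i => (f i : ℝ))) ∧
        ∀ k, x k + δ k ∈ Set.Icc (-(l / 2)) (l / 2)} = n := by
  have hdet : |(Rᵀ * Gᵀ).det| = |G.det| := by
    rw [det_mul, det_transpose, det_transpose, abs_mul, abs_det_eq_one_of_transpose_mul_self hR,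
      one_mul]
  have hA : IsUnit (Rᵀ * Gᵀ).det := by
    rw [isUnit_iff_ne_zero, ← abs_ne_zero, hdet, abs_ne_zero]
    exact hG.ne_zero
  have hmem := (Rᵀ * Gᵀ).mem_span_columnBasis hA
  have hb : ∀ x ∈ Submodule.span ℤ (range ((Rᵀ * Gᵀ).columnBasis hA)), x ≠ 0 → ∀ j, x j ≠ 0 := by
    intro x hx hx0
    obtain ⟨f, rfl⟩ := (hmem x).mp hx
    exact hproj f (by rintro rfl; simp [← Pi.zero_def] at hx0)
  have hvol : volume (closedBall (0 : Fin p → ℝ) (l / 2)) =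
      n * volume (ZSpan.fundamentalDomain ((Rᵀ * Gᵀ).columnBasis hA)) := by
    rw [Real.volume_pi_closedBall _ (by positivity), Matrix.volume_fundamentalDomain_columnBasis,
      hdet, Fintype.card_fin, mul_div_cancel₀ _ two_ne_zero, hln,
      ENNReal.ofReal_mul (Nat.cast_nonneg n), ENNReal.ofReal_natCast]
  obtain ⟨δ, hδ, hcount⟩ :=
    exists_mem_voronoiCell_ballCount_neg_eq_of_volume hb (by positivity) hvol
  refine ⟨δ, fun f => ?_, ?_⟩
  · simpa [EuclideanSpace.norm_eq] using hδ _ ((hmem _).mpr ⟨f, rfl⟩)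
  · rw [← hcount, ballCount]
    congr 1
    ext x
    simp [hmem, dist_pi_le_iff (by positivity : 0 ≤ l / 2), Real.dist_eq, abs_le]
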